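/- Let Ω ⊆ ℝ^d be open and bounded, p: Ω → (1,∞) measurable with 1 < p⁻ := ess inf p ≤ p⁺ := ess sup p < ∞, and q = p' the pointwise conjugate exponent. Let δ ≥ 0 and define A(x,a) = (δ+|a|)^{p(x)-2} a. If u ∈ W^{1,p(·)}_0(Ω) satisfies ∫_Ω A(x,∇u)·∇v dx = ∫_Ω f v dx for all v ∈ W^{1,p(·)}_0(Ω), where f ∈ L^{p'(·)}(Ω), then u is the unique such solution (any two solutions coincide a.e.). -/

import Mathlib

/-! The flux `a ↦ (δ + |a|)^(p-2) a` is strictly monotone, pointwise in `x`. Testing both weak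
formulations with `u₁ - u₂` shows that `⟪A(x,∇u₁) - A(x,∇u₂), ∇u₁ - ∇u₂⟫` is a nonnegative
function with zero integral, hence vanishes a.e., so `∇u₁ = ∇u₂` a.e.; the Poincaré property of
`W` then gives `u₁ = u₂` a.e. -/

open MeasureTheory
open scoped RealInnerProductSpace

lemma strictMonoOn_rpow_sub_two_mul {p δ : ℝ} (hp : 1 < p) (hδ : 0 ≤ δ) :
    StrictMonoOn (fun t : ℝ => (δ + t) ^ (p - 2) * t) (Set.Ici 0) := by
  intro s (hs : 0 ≤ s) t _ hst
  have htpos : 0 < t := hs.trans_lt hst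
  have ht : 0 < δ + t := by linarith
  rcases (add_nonneg hδ hs).eq_or_lt with h0 | h0
  · have hs0 : s = 0 := by linarith
    simp only [hs0, mul_zero]
    positivity
  -- `(δ + t)^(p-2) t = (δ + t)^(p-1) · t/(δ + t)`, a product of a strictly increasing and a
  -- nondecreasing nonnegative factor
  have hsplit : ∀ r, 0 < δ + r → (δ + r) ^ (p - 2) * r = (δ + r) ^ (p - 1) * (r / (δ + r)) := by
    intro r hr
    rw [show p - 2 = (p - 1) - 1 by ring, Real.rpow_sub_one hr.ne']
    ring
  simp only [hsplit s h0, hsplit t ht]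
  have hfrac : s / (δ + s) ≤ t / (δ + t) := by
    rw [div_le_div_iff₀ h0 ht]
    nlinarith
  calc (δ + s) ^ (p - 1) * (s / (δ + s)) ≤ (δ + s) ^ (p - 1) * (t / (δ + t)) :=
        mul_le_mul_of_nonneg_left hfrac (Real.rpow_nonneg h0.le _)
    _ < (δ + t) ^ (p - 1) * (t / (δ + t)) :=
        mul_lt_mul_of_pos_right (Real.rpow_lt_rpow h0.le (by linarith) (by linarith))
          (by positivity)

section InnerProductSpace

variable {E : Type*} [NormedAddCommGroup E] [InnerProductSpace ℝ E]

lemma mul_sub_mul_norm_le_inner_smul_sub_smul {α β : ℝ} (hα : 0 ≤ α) (hβ : 0 ≤ β) (a b : E) :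
    (α * ‖a‖ - β * ‖b‖) * (‖a‖ - ‖b‖) ≤ ⟪α • a - β • b, a - b⟫ := by
  have hexpand : ⟪α • a - β • b, a - b⟫ = α * ‖a‖ ^ 2 + β * ‖b‖ ^ 2 - (α + β) * ⟪a, b⟫ := by
    simp only [inner_sub_left, inner_sub_right, real_inner_smul_left,
      real_inner_self_eq_norm_sq, real_inner_comm a b]
    ring
  rw [hexpand]
  nlinarith [real_inner_le_norm a b]

lemma inner_rpow_smul_sub_rpow_smul_pos {p δ : ℝ} (hp : 1 < p) (hδ : 0 ≤ δ) {a b : E}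
    (hab : a ≠ b) :
    0 < ⟪(δ + ‖a‖) ^ (p - 2) • a - (δ + ‖b‖) ^ (p - 2) • b, a - b⟫ := by
  have hbound := mul_sub_mul_norm_le_inner_smul_sub_smul
    (Real.rpow_nonneg (by positivity : 0 ≤ δ + ‖a‖) (p - 2))
    (Real.rpow_nonneg (by positivity : 0 ≤ δ + ‖b‖) (p - 2)) a b
  have hmono := strictMonoOn_rpow_sub_two_mul hp hδ
  rcases lt_trichotomy ‖a‖ ‖b‖ with hlt | heq | hgt
  · have := hmono (norm_nonneg a) (norm_nonneg b) hlt
    nlinarith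
  · have ha : 0 < ‖a‖ := norm_pos_iff.mpr <| by
      rintro rfl
      exact hab (norm_eq_zero.mp (by rw [← heq, norm_zero])).symm
    rw [← heq, ← smul_sub, real_inner_smul_left, real_inner_self_eq_norm_sq]
    have := norm_pos_iff.mpr (sub_ne_zero.mpr hab)
    positivity
  · have := hmono (norm_nonneg b) (norm_nonneg a) hgt
    nlinarith

lemma ae_eq_of_integral_inner_eq_of_strictMono {X : Type*} [MeasurableSpace X] {μ : Measure X}
    {A : X → E → E} (hA : ∀ᵐ x ∂μ, ∀ a b, a ≠ b → 0 < ⟪A x a - A x b, a - b⟫)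
    {g₁ g₂ : X → E}
    (hint₁ : Integrable (fun x => ⟪A x (g₁ x), g₁ x - g₂ x⟫) μ)
    (hint₂ : Integrable (fun x => ⟪A x (g₂ x), g₁ x - g₂ x⟫) μ)
    (heq : ∫ x, ⟪A x (g₁ x), g₁ x - g₂ x⟫ ∂μ = ∫ x, ⟪A x (g₂ x), g₁ x - g₂ x⟫ ∂μ) :
    g₁ =ᵐ[μ] g₂ := by
  set h : X → ℝ := fun x => ⟪A x (g₁ x) - A x (g₂ x), g₁ x - g₂ x⟫
  have hh : h = fun x => ⟪A x (g₁ x), g₁ x - g₂ x⟫ - ⟪A x (g₂ x), g₁ x - g₂ x⟫ := by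
    funext x
    exact inner_sub_left _ _ _
  have hnonneg : 0 ≤ᵐ[μ] h := by
    filter_upwards [hA] with x hx
    by_cases hg : g₁ x = g₂ x
    · simp [h, hg]
    · exact (hx _ _ hg).le
  have hzero : h =ᵐ[μ] 0 := by
    rw [← integral_eq_zero_iff_of_nonneg_ae hnonneg (hh ▸ hint₁.sub hint₂), hh,
      integral_sub hint₁ hint₂, heq, sub_self]
  filter_upwards [hA, hzero] with x hx hx0
  by_contra hg
  exact (hx _ _ hg).ne' hx0

end InnerProductSpace

theorem stmt9 {d : ℕ} (Ω : Set (EuclideanSpace ℝ (Fin d)))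
    (p : EuclideanSpace ℝ (Fin d) → ℝ)
    (pm pM : ℝ) (hpm : 1 < pm)
    (hbound : ∀ᵐ x ∂(volume.restrict Ω), pm ≤ p x ∧ p x ≤ pM)
    (δ : ℝ) (hδ : 0 ≤ δ)
    (f : EuclideanSpace ℝ (Fin d) → ℝ)
    (W : Set ((EuclideanSpace ℝ (Fin d) → ℝ) ×
      (EuclideanSpace ℝ (Fin d) → EuclideanSpace ℝ (Fin d))))
    (hWsub : ∀ v w, v ∈ W → w ∈ W → (v.1 - w.1, v.2 - w.2) ∈ W)
    (hWpoincare : ∀ v ∈ W, (∀ᵐ x ∂(volume.restrict Ω), v.2 x = 0) →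
      (∀ᵐ x ∂(volume.restrict Ω), v.1 x = 0))
    (u₁ u₂ : (EuclideanSpace ℝ (Fin d) → ℝ) ×
      (EuclideanSpace ℝ (Fin d) → EuclideanSpace ℝ (Fin d)))
    (hu₁ : u₁ ∈ W) (hu₂ : u₂ ∈ W)
    (hint₁ : ∀ v ∈ W, Integrable
      (fun x => (inner ℝ ((δ + ‖u₁.2 x‖) ^ (p x - 2) • u₁.2 x) (v.2 x) : ℝ))
      (volume.restrict Ω))
    (hint₂ : ∀ v ∈ W, Integrable
      (fun x => (inner ℝ ((δ + ‖u₂.2 x‖) ^ (p x - 2) • u₂.2 x) (v.2 x) : ℝ))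
      (volume.restrict Ω))
    (heq₁ : ∀ v ∈ W,
      (∫ x in Ω, (inner ℝ ((δ + ‖u₁.2 x‖) ^ (p x - 2) • u₁.2 x) (v.2 x) : ℝ)) =
        ∫ x in Ω, f x * v.1 x)
    (heq₂ : ∀ v ∈ W,
      (∫ x in Ω, (inner ℝ ((δ + ‖u₂.2 x‖) ^ (p x - 2) • u₂.2 x) (v.2 x) : ℝ)) =
        ∫ x in Ω, f x * v.1 x) :
    ∀ᵐ x ∂(volume.restrict Ω), u₁.1 x = u₂.1 x := by
  have hv : (u₁.1 - u₂.1, u₁.2 - u₂.2) ∈ W := hWsub u₁ u₂ hu₁ hu₂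
  have hmono : ∀ᵐ x ∂(volume.restrict Ω), ∀ a b : EuclideanSpace ℝ (Fin d), a ≠ b →
      0 < ⟪(δ + ‖a‖) ^ (p x - 2) • a - (δ + ‖b‖) ^ (p x - 2) • b, a - b⟫ := by
    filter_upwards [hbound] with x hx a b hab
    exact inner_rpow_smul_sub_rpow_smul_pos (hpm.trans_le hx.1) hδ hab
  have hgrad : u₁.2 =ᵐ[volume.restrict Ω] u₂.2 := by
    have htest := (heq₁ _ hv).trans (heq₂ _ hv).symm
    simp only [Pi.sub_apply] at htest
    exact ae_eq_of_integral_inner_eq_of_strictMono hmono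
      (by simpa only [Pi.sub_apply] using hint₁ _ hv)
      (by simpa only [Pi.sub_apply] using hint₂ _ hv) htest
  have hdiff := hWpoincare _ hv (by filter_upwards [hgrad] with x hx using sub_eq_zero.mpr hx)
  filter_upwards [hdiff] with x hx
  exact sub_eq_zero.mp hx
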